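/- Let T be an invertible ergodic measure-preserving transformation of a probability space (X, μ) and f ∈ L¹(X,μ) with ∫ f dμ = 0 such that f is not a measurable coboundary for T. Then for μ-almost every x there exists n ≥ 1 with Sₙ(f,x) ≤ 0, where Sₙ(f,x) = Σ_{k=0}^{n-1} f(Tᵏx). -/

import Mathlib

/-!
Let `G = inf_{n ≥ 1} Sₙ f`, taken in `EReal`. From `G = f + min 0 (G ∘ T)` the set `{G = ⊥}` is
`T`-invariant, so by ergodicity it is null once the sums stay positive on a set of positive
measure. Off it, `g = G` is real and `f = max g 0 + (h - h ∘ T)` with `h = min g 0 ≤ 0`. The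
Birkhoff sums of `f - min (max g 0) 1` are then bounded below along a.e. orbit, so by the maximal
ergodic theorem its integral is nonnegative. Since `∫ f ≤ 0` this forces `max g 0 = 0` a.e., and
`f` is the coboundary of `h`.
-/

open MeasureTheory Filter Set

theorem Measurable.birkhoffSum {X : Type*} [MeasurableSpace X] {T : X → X} {φ : X → ℝ}
    (hφ : Measurable φ) (hT : Measurable T) (n : ℕ) : Measurable (birkhoffSum T φ n) :=
  Finset.measurable_sum _ fun k _ => hφ.comp (hT.iterate k)

section MaximalErgodic

variable {X : Type*} {T : X → X} {φ : X → ℝ}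

/-- `maxBirkhoffSum T φ n x = max (S₀ φ x, …, Sₙ φ x)`, where `S₀ = 0`. -/
noncomputable def maxBirkhoffSum (T : X → X) (φ : X → ℝ) : ℕ → X → ℝ
  | 0 => 0
  | n + 1 => fun x => max 0 (φ x + maxBirkhoffSum T φ n (T x))

theorem maxBirkhoffSum_le_succ (n : ℕ) (x : X) :
    maxBirkhoffSum T φ n x ≤ maxBirkhoffSum T φ (n + 1) x := by
  induction n generalizing x with
  | zero => exact le_max_left _ _
  | succ n ih => exact max_le_max le_rfl (add_le_add_right (ih (T x)) _)

theorem monotone_maxBirkhoffSum (x : X) : Monotone fun n => maxBirkhoffSum T φ n x :=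
  monotone_nat_of_le_succ fun n => maxBirkhoffSum_le_succ n x

theorem birkhoffSum_le_maxBirkhoffSum {k n : ℕ} (hkn : k ≤ n) (x : X) :
    birkhoffSum T φ k x ≤ maxBirkhoffSum T φ n x := by
  induction n generalizing k x with
  | zero => simp [Nat.le_zero.mp hkn, maxBirkhoffSum]
  | succ n ih =>
    cases k with
    | zero => exact le_max_left _ _
    | succ k =>
      rw [birkhoffSum_succ']
      exact (add_le_add_right (ih (k := k) (by omega) (T x)) _).trans (le_max_right _ _)

theorem exists_birkhoffSum_eq_maxBirkhoffSum (n : ℕ) (x : X) :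
    ∃ k, birkhoffSum T φ k x = maxBirkhoffSum T φ n x := by
  induction n generalizing x with
  | zero => exact ⟨0, rfl⟩
  | succ n ih =>
    obtain ⟨k, hk⟩ := ih (T x)
    rcases max_choice 0 (φ x + maxBirkhoffSum T φ n (T x)) with h | h
    · exact ⟨0, by simp only [maxBirkhoffSum, h, birkhoffSum_zero]⟩
    · exact ⟨k + 1, by simp only [maxBirkhoffSum, h, birkhoffSum_succ', hk]⟩

theorem setOf_exists_birkhoffSum_pos :
    {x | ∃ n, 0 < birkhoffSum T φ n x} = ⋃ n, {x | 0 < maxBirkhoffSum T φ n x} := by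
  ext x
  rw [mem_iUnion]
  constructor
  · rintro ⟨n, hn⟩
    exact ⟨n, hn.trans_le (birkhoffSum_le_maxBirkhoffSum le_rfl x)⟩
  · rintro ⟨n, hn⟩
    obtain ⟨k, hk⟩ := exists_birkhoffSum_eq_maxBirkhoffSum (T := T) (φ := φ) n x
    exact ⟨k, hk ▸ hn⟩

theorem maxBirkhoffSum_le_add_comp {n : ℕ} {x : X} (hx : 0 < maxBirkhoffSum T φ n x) :
    maxBirkhoffSum T φ n x ≤ φ x + maxBirkhoffSum T φ n (T x) := by
  cases n with
  | zero => exact absurd hx (lt_irrefl 0)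
  | succ n =>
    have hpos : 0 < φ x + maxBirkhoffSum T φ n (T x) := by
      simpa only [maxBirkhoffSum, lt_max_iff, lt_irrefl, false_or] using hx
    calc maxBirkhoffSum T φ (n + 1) x = φ x + maxBirkhoffSum T φ n (T x) := max_eq_right hpos.le
      _ ≤ φ x + maxBirkhoffSum T φ (n + 1) (T x) :=
        add_le_add_right (maxBirkhoffSum_le_succ n (T x)) _

variable [MeasurableSpace X] {μ : Measure X}

theorem Measurable.maxBirkhoffSum (hφ : Measurable φ) (hT : Measurable T) :
    ∀ n, Measurable (maxBirkhoffSum T φ n)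
  | 0 => measurable_const
  | n + 1 => measurable_const.max (hφ.add ((hφ.maxBirkhoffSum hT n).comp hT))

theorem MeasureTheory.Integrable.maxBirkhoffSum (hφ : Integrable φ μ)
    (hT : MeasurePreserving T μ μ) : ∀ n, Integrable (maxBirkhoffSum T φ n) μ
  | 0 => integrable_zero _ _ _
  | n + 1 => (integrable_zero _ _ _).sup
      (hφ.add (hT.integrable_comp_of_integrable (hφ.maxBirkhoffSum hT n)))

theorem MeasureTheory.MeasurePreserving.setIntegral_maxBirkhoffSum_pos_nonneg
    (hT : MeasurePreserving T μ μ) (hφm : Measurable φ) (hφ : Integrable φ μ) (n : ℕ) :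
    0 ≤ ∫ x in {x | 0 < maxBirkhoffSum T φ n x}, φ x ∂μ := by
  set M := maxBirkhoffSum T φ n
  have hMm : Measurable M := hφm.maxBirkhoffSum hT.measurable n
  have hM : Integrable M μ := hφ.maxBirkhoffSum hT n
  have hMT : Integrable (fun x => M (T x)) μ := hT.integrable_comp_of_integrable hM
  have hM0 : ∀ x, 0 ≤ M x := fun x =>
    (birkhoffSum_zero T φ x).symm.trans_le (birkhoffSum_le_maxBirkhoffSum (Nat.zero_le n) x)
  set E := {x | 0 < M x}
  have hE : MeasurableSet E := measurableSet_lt measurable_const hMm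
  calc (0 : ℝ) = ∫ x, M x ∂μ - ∫ x, M (T x) ∂μ := by
        rw [← integral_map hT.measurable.aemeasurable hMm.aestronglyMeasurable, hT.map_eq,
          sub_self]
    _ ≤ ∫ x in E, M x ∂μ - ∫ x in E, M (T x) ∂μ := by
        rw [setIntegral_eq_integral_of_forall_compl_eq_zero (s := E) (f := M) fun x hx =>
          le_antisymm (not_lt.mp hx) (hM0 x)]
        exact sub_le_sub_left (setIntegral_le_integral hMT (ae_of_all _ fun x => hM0 (T x))) _
    _ = ∫ x in E, (M x - M (T x)) ∂μ := (integral_sub hM.integrableOn hMT.integrableOn).symm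
    _ ≤ ∫ x in E, φ x ∂μ := setIntegral_mono_on (hM.sub hMT).integrableOn hφ.integrableOn hE
        fun x hx => by linarith [maxBirkhoffSum_le_add_comp hx]

/-- The maximal ergodic theorem. -/
theorem MeasureTheory.MeasurePreserving.setIntegral_exists_birkhoffSum_pos_nonneg
    (hT : MeasurePreserving T μ μ) (hφm : Measurable φ) (hφ : Integrable φ μ) :
    0 ≤ ∫ x in {x | ∃ n, 0 < birkhoffSum T φ n x}, φ x ∂μ := by
  rw [setOf_exists_birkhoffSum_pos]
  refine ge_of_tendsto' (tendsto_setIntegral_of_monotone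
    (fun n => measurableSet_lt measurable_const (hφm.maxBirkhoffSum hT.measurable n))
    (fun m n hmn x hx => hx.trans_le (monotone_maxBirkhoffSum x hmn)) hφ.integrableOn) ?_
  exact hT.setIntegral_maxBirkhoffSum_pos_nonneg hφm hφ

theorem MeasureTheory.MeasurePreserving.integral_nonneg_of_ae_exists_birkhoffSum_pos
    (hT : MeasurePreserving T μ μ) (hφm : Measurable φ) (hφ : Integrable φ μ)
    (h : ∀ᵐ x ∂μ, ∃ n, 0 < birkhoffSum T φ n x) : 0 ≤ ∫ x, φ x ∂μ := by
  have hfull : {x | ∃ n, 0 < birkhoffSum T φ n x} =ᵐ[μ] univ := ae_eq_univ.2 (ae_iff.1 h)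
  rw [← setIntegral_univ, ← setIntegral_congr_set hfull]
  exact hT.setIntegral_exists_birkhoffSum_pos_nonneg hφm hφ

theorem MeasureTheory.MeasurePreserving.integral_nonneg_of_ae_bddBelow_birkhoffSum
    [IsFiniteMeasure μ] (hT : MeasurePreserving T μ μ) (hφm : Measurable φ)
    (hφ : Integrable φ μ) (h : ∀ᵐ x ∂μ, BddBelow (range fun n => birkhoffSum T φ n x)) :
    0 ≤ ∫ x, φ x ∂μ := by
  have hshift : ∀ ε > 0, 0 ≤ ∫ x, φ x ∂μ + ε * μ.real univ := fun ε hε => by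
    have hpos : ∀ᵐ x ∂μ, ∃ n, 0 < birkhoffSum T (fun x => φ x + ε) n x := by
      filter_upwards [h] with x ⟨b, hb⟩
      obtain ⟨n, hn⟩ := exists_nat_gt (-b / ε)
      refine ⟨n, ?_⟩
      have hbn : b ≤ birkhoffSum T φ n x := hb ⟨n, rfl⟩
      rw [div_lt_iff₀ hε] at hn
      simp only [birkhoffSum, Finset.sum_add_distrib, Finset.sum_const, Finset.card_range,
        nsmul_eq_mul] at hbn ⊢
      linarith
    have := hT.integral_nonneg_of_ae_exists_birkhoffSum_pos (hφm.add_const ε)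
      (hφ.add (integrable_const ε)) hpos
    rwa [integral_add hφ (integrable_const ε), integral_const, smul_eq_mul, mul_comm] at this
  refine le_of_forall_pos_le_add fun δ hδ => ?_
  have := hshift (δ / (μ.real univ + 1)) (by positivity)
  have hle : δ / (μ.real univ + 1) * μ.real univ ≤ δ := by
    rw [div_mul_eq_mul_div, div_le_iff₀ (by positivity)]
    linarith
  linarith

end MaximalErgodic

theorem birkhoffSum_sub_comp {X G : Type*} [AddCommGroup G] (T : X → X) (h : X → G) (n : ℕ)
    (x : X) : birkhoffSum T (fun y => h y - h (T y)) n x = h x - h (T^[n] x) := by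
  induction n with
  | zero => simp
  | succ n ih => rw [birkhoffSum_succ, ih, Function.iterate_succ_apply']; abel

theorem MeasureTheory.MeasurePreserving.ae_eq_zero_of_ae_eq_add_coboundary
    {X : Type*} [MeasurableSpace X] {μ : Measure X} [IsFiniteMeasure μ] {T : X → X}
    {f p h : X → ℝ} {C : ℝ} (hT : MeasurePreserving T μ μ) (hfm : Measurable f)
    (hf : Integrable f μ) (hf0 : ∫ x, f x ∂μ ≤ 0) (hpm : Measurable p) (hp : ∀ x, 0 ≤ p x)
    (hC : ∀ x, h x ≤ C) (hfp : f =ᵐ[μ] fun x => p x + (h x - h (T x))) : p =ᵐ[μ] 0 := by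
  set u : X → ℝ := fun x => min (p x) 1
  have hum : Measurable u := hpm.min measurable_const
  have hu : Integrable u μ := (integrable_const (1 : ℝ)).mono' hum.aestronglyMeasurable
    (ae_of_all _ fun x => by simp [u, abs_of_nonneg, hp x])
  have hsum : ∀ᵐ x ∂μ, ∀ n, birkhoffSum T f n x =
      birkhoffSum T p n x + (h x - h (T^[n] x)) := by
    filter_upwards [ae_all_iff.2 fun n =>
      hT.quasiMeasurePreserving.birkhoffSum_ae_eq_of_ae_eq hfp n] with x hx n
    rw [hx n, ← birkhoffSum_sub_comp]
    exact birkhoffSum_add' T p _ n x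
  have hbdd : ∀ᵐ x ∂μ, BddBelow (range fun n => birkhoffSum T (f - u) n x) := by
    filter_upwards [hsum] with x hx
    refine ⟨h x - C, forall_mem_range.2 fun n => ?_⟩
    have hpu : birkhoffSum T u n x ≤ birkhoffSum T p n x :=
      Finset.sum_le_sum fun k _ => min_le_left _ _
    rw [birkhoffSum_sub, hx n]
    linarith [hC (T^[n] x)]
  have hu0 : ∫ x, u x ∂μ = 0 := by
    have := hT.integral_nonneg_of_ae_bddBelow_birkhoffSum (hfm.sub hum) (hf.sub hu) hbdd
    rw [Pi.sub_def, integral_sub hf hu] at this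
    exact le_antisymm (by linarith) (integral_nonneg fun x => le_min (hp x) zero_le_one)
  filter_upwards [(integral_eq_zero_iff_of_nonneg (fun x => le_min (hp x) zero_le_one) hu).1 hu0]
    with x hx
  exact le_antisymm (not_lt.1 fun hpx => (lt_min hpx one_pos).ne' hx) (hp x)

theorem EReal.coe_add_iInf {ι : Sort*} (r : ℝ) (b : ι → EReal) :
    (r : EReal) + ⨅ i, b i = ⨅ i, ((r : EReal) + b i) :=
  Monotone.map_iInf_of_continuousAt (f := fun y => (r : EReal) + y)
    ((EReal.continuousAt_add (Or.inl (EReal.coe_ne_top r)) (Or.inl (EReal.coe_ne_bot r))).comp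
      (continuousAt_const.prodMk continuousAt_id))
    (fun _ _ hab => add_le_add_right hab _) (EReal.coe_add_top r)

section BirkhoffInf

variable {X : Type*} {T : X → X} {f : X → ℝ}

noncomputable def birkhoffInf (T : X → X) (f : X → ℝ) (x : X) : EReal :=
  ⨅ n : ℕ, ((birkhoffSum T f (n + 1) x : ℝ) : EReal)

theorem birkhoffInf_eq_add_min (x : X) :
    birkhoffInf T f x = f x + min 0 (birkhoffInf T f (T x)) := by
  rw [birkhoffInf, ← inf_iInf_nat_succ, birkhoffInf, ← min_add_add_left, EReal.coe_add_iInf,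
    add_zero, zero_add, birkhoffSum_one]
  simp only [birkhoffSum_succ' T f (_ + 1), EReal.coe_add]

theorem birkhoffInf_ne_top (x : X) : birkhoffInf T f x ≠ ⊤ :=
  ne_top_of_le_ne_top (EReal.coe_ne_top _)
    (iInf_le (fun n : ℕ => ((birkhoffSum T f (n + 1) x : ℝ) : EReal)) 0)

theorem preimage_setOf_birkhoffInf_eq_bot :
    T ⁻¹' {x | birkhoffInf T f x = ⊥} = {x | birkhoffInf T f x = ⊥} := by
  ext x
  change _ ↔ birkhoffInf T f x = ⊥
  rw [birkhoffInf_eq_add_min x, EReal.add_eq_bot_iff, min_eq_bot]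
  simp

theorem toReal_birkhoffInf_eq {x : X} (hx : birkhoffInf T f (T x) ≠ ⊥) :
    (birkhoffInf T f x).toReal = f x + min 0 (birkhoffInf T f (T x)).toReal := by
  rw [birkhoffInf_eq_add_min x, ← EReal.coe_toReal (birkhoffInf_ne_top _) hx, ← EReal.coe_zero,
    ← EReal.coe_strictMono.monotone.map_min, ← EReal.coe_add, EReal.toReal_coe,
    EReal.toReal_coe]

variable [MeasurableSpace X] {μ : Measure X}

theorem Measurable.birkhoffInf (hf : Measurable f) (hT : Measurable T) :
    Measurable (birkhoffInf T f) :=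
  Measurable.iInf fun n => (hf.birkhoffSum hT (n + 1)).coe_real_ereal

theorem Ergodic.ae_birkhoffInf_ne_bot (hT : Ergodic T μ) (hf : Measurable f)
    (h : ∃ᵐ x ∂μ, birkhoffInf T f x ≠ ⊥) : ∀ᵐ x ∂μ, birkhoffInf T f x ≠ ⊥ :=
  (hT.ae_mem_or_ae_notMem (hf.birkhoffInf hT.measurable (measurableSet_singleton ⊥))
    preimage_setOf_birkhoffInf_eq_bot).resolve_left fun hbot =>
      h (hbot.mono fun _ hx => not_not.2 hx)

end BirkhoffInf

theorem Ergodic.ae_exists_birkhoffSum_nonpos {X : Type*} [MeasurableSpace X] {μ : Measure X}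
    [IsFiniteMeasure μ] {T : X → X} {f : X → ℝ} (hT : Ergodic T μ) (hfm : Measurable f)
    (hf : Integrable f μ) (hf0 : ∫ x, f x ∂μ ≤ 0)
    (hnc : ¬ ∃ g : X → ℝ, Measurable g ∧ f =ᵐ[μ] fun x => g x - g (T x)) :
    ∀ᵐ x ∂μ, ∃ n, 1 ≤ n ∧ birkhoffSum T f n x ≤ 0 := by
  by_contra hpos
  have hfin : ∀ᵐ x ∂μ, birkhoffInf T f x ≠ ⊥ := by
    refine hT.ae_birkhoffInf_ne_bot hfm ((not_eventually.1 hpos).mono fun x hx => ?_)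
    simp only [not_exists, not_and, not_le] at hx
    exact ne_bot_of_le_ne_bot EReal.zero_ne_bot
      (le_iInf fun n => EReal.coe_nonneg.2 (hx (n + 1) n.succ_pos).le)
  set g : X → ℝ := fun x => (birkhoffInf T f x).toReal
  have hgm : Measurable g := (hfm.birkhoffInf hT.measurable).ereal_toReal
  have hcob : f =ᵐ[μ] fun x => max (g x) 0 + (min (g x) 0 - min (g (T x)) 0) := by
    filter_upwards [hT.quasiMeasurePreserving.ae hfin] with x hx
    linarith [toReal_birkhoffInf_eq hx, min_add_max (g x) 0, min_comm (0 : ℝ) (g (T x))]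
  have hmax : (fun x => max (g x) 0) =ᵐ[μ] 0 :=
    hT.toMeasurePreserving.ae_eq_zero_of_ae_eq_add_coboundary hfm hf hf0
      (hgm.max measurable_const) (fun x => le_max_right _ _) (fun x => min_le_right _ 0) hcob
  refine hnc ⟨fun x => min (g x) 0, hgm.min measurable_const, hcob.trans ?_⟩
  filter_upwards [hmax] with x hx
  rw [show max (g x) 0 = 0 from hx, zero_add]

theorem stmt_5_general {X : Type*} [MeasurableSpace X] (μ : Measure X) [IsProbabilityMeasure μ]
    (T : X → X) (hT : Ergodic T μ)
    (f : X → ℝ) (hf : Integrable f μ) (hmean : ∫ x, f x ∂μ = 0)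
    (hnc : ¬ ∃ g : X → ℝ, Measurable g ∧ f =ᵐ[μ] fun x => g x - g (T x)) :
    ∀ᵐ x ∂μ, ∃ n : ℕ, 1 ≤ n ∧ ∑ k ∈ Finset.range n, f (T^[k] x) ≤ 0 := by
  obtain ⟨f', hf'm, hff'⟩ := hf.aemeasurable
  have hsum : ∀ᵐ x ∂μ, ∀ n, birkhoffSum T f n x = birkhoffSum T f' n x :=
    ae_all_iff.2 fun n => hT.quasiMeasurePreserving.birkhoffSum_ae_eq_of_ae_eq hff' n
  have hnc' : ¬ ∃ g : X → ℝ, Measurable g ∧ f' =ᵐ[μ] fun x => g x - g (T x) :=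
    fun ⟨g, hg, hf'g⟩ => hnc ⟨g, hg, hff'.trans hf'g⟩
  have hmean' : ∫ x, f' x ∂μ ≤ 0 := (integral_congr_ae hff').symm.trans_le hmean.le
  filter_upwards [hT.ae_exists_birkhoffSum_nonpos hf'm (hf.congr hff') hmean' hnc', hsum]
    with x ⟨n, hn, hle⟩ hx
  exact ⟨n, hn, (hx n).trans_le hle⟩

theorem stmt_5 {X : Type*} [MeasurableSpace X] (μ : Measure X) [IsProbabilityMeasure μ]
    (T : X → X) (hT : Ergodic T μ) (hinv : Function.Bijective T)
    (f : X → ℝ) (hf : Integrable f μ) (hmean : ∫ x, f x ∂μ = 0)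
    (hnc : ¬ ∃ g : X → ℝ, Measurable g ∧ f =ᵐ[μ] fun x => g x - g (T x)) :
    ∀ᵐ x ∂μ, ∃ n : ℕ, 1 ≤ n ∧ ∑ k ∈ Finset.range n, f (T^[k] x) ≤ 0 :=
  stmt_5_general μ T hT f hf hmean hnc
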